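/- arXiv:1306.0299 — 5 statements merged into one kernel-verified Lean document; each statement's English description precedes it below -/
import Mathlib

section
/- Let p be a prime and R a commutative ring in which p·1 = 0, let D : R → R be a derivation, and let a ∈ R. Writing L_b : R → R for the multiplication map x ↦ b·x, one has the identity of additive endomorphisms of R: (D + L_a)^p = D^p + L_{a^p + D^{p-1}(a)}, where the powers of maps denote iterated composition. (This is the Jacobson–Hochschild identity used in the paper to compute p-curvatures of rank-one connections.) -/
/-!
In `End(R)` the multiplication `L_a` commutes with all iterated commutators
`ad_D^i (L_a) = L_{D^i a}`, so the identity is an instance of the ring identity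
`(v + u)^p = v^p + u^p + ad_v^{p-1} u` in characteristic `p`, valid whenever `u` commutes with
every `ad_v^i u`. For the latter, put `z = u X + v ∈ A[X]`. The derivative of `z^p` is
`∑ z^i u z^{p-1-i}`, which in characteristic `p` equals `ad_z^{p-1} u` because
`(-1)^i (p-1 choose i) ≡ 1`, and `ad_z^i u = ad_v^i u` is a constant. So the coefficient of `X`
in `z^p` is `ad_v^{p-1} u`, those of `X^k` with `2 ≤ k < p` vanish (`k` is invertible), and
setting `X = 1` gives the identity.
-/

open Polynomial Finset

section CharPrime

variable {A : Type*} [Ring A] {p : ℕ}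

theorem natCast_choose_pred_eq_neg_one_pow (hp : p.Prime) (hpA : (p : A) = 0) :
    ∀ k ≤ p - 1, ((p - 1).choose k : A) = (-1) ^ k
  | 0, _ => by simp
  | k + 1, hk => by
    have hpascal : (p - 1).choose k + (p - 1).choose (k + 1) = p.choose (k + 1) := by
      rw [← Nat.choose_succ_succ', Nat.sub_add_cancel hp.one_le]
    obtain ⟨c, hc⟩ := hp.dvd_choose_self k.succ_ne_zero (by omega)
    have hsum : ((p - 1).choose k : A) + ((p - 1).choose (k + 1) : A) = 0 := by
      rw [← Nat.cast_add, hpascal, hc, Nat.cast_mul, hpA, zero_mul]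
    rw [eq_neg_of_add_eq_zero_right hsum, natCast_choose_pred_eq_neg_one_pow hp hpA k (by omega),
      pow_succ, mul_neg_one]

theorem isUnit_natCast_of_coprime (hpA : (p : A) = 0) {k : ℕ} (hk : k.Coprime p) :
    IsUnit (k : A) := by
  have hbezout : ((k * k.gcdA p + p * k.gcdB p : ℤ) : A) = ((k.gcd p : ℤ) : A) := by
    rw [← Nat.gcd_eq_gcd_ab]
  push_cast [hk, hpA] at hbezout
  have hinv : (k : A) * k.gcdA p = 1 := by simpa using hbezout
  exact isUnit_iff_exists.mpr ⟨_, hinv, (Nat.cast_commute _ _).eq.symm.trans hinv⟩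

theorem Commute.sub_pow_prime_pred {x y : A} (h : Commute x y) (hp : p.Prime)
    (hpA : (p : A) = 0) :
    (x - y) ^ (p - 1) = ∑ i ∈ range p, x ^ i * y ^ (p - 1 - i) := by
  have hchoose := natCast_choose_pred_eq_neg_one_pow hp hpA
  have hsign : (-1 : A) ^ (p - 1) = 1 := by simpa using (hchoose (p - 1) le_rfl).symm
  rw [sub_eq_add_neg, h.neg_right.add_pow, Nat.sub_add_cancel hp.one_le]
  refine sum_congr rfl fun i hi => ?_
  have hi : i ≤ p - 1 := by have := mem_range.mp hi; omega
  rw [hchoose i hi, mul_assoc, neg_pow, mul_assoc, ← ((Commute.neg_one_left y).pow_pow _ _).eq,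
    ← mul_assoc ((-1 : A) ^ _), ← pow_add, Nat.sub_add_cancel hi, hsign, one_mul]

theorem iterate_commutator_prime_pred (hp : p.Prime) (hpA : (p : A) = 0) (z u : A) :
    (fun y => z * y - y * z)^[p - 1] u = ∑ i ∈ range p, z ^ i * u * z ^ (p - 1 - i) := by
  have hpE : (p : Module.End ℤ A) = 0 := by ext; simp [hpA]
  have had : (fun y => z * y - y * z) = ⇑(LinearMap.mulLeft ℤ z - LinearMap.mulRight ℤ z) := rfl
  rw [had, ← Module.End.pow_apply, (LinearMap.commute_mulLeft_right z z).sub_pow_prime_pred hp hpE]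
  simp [LinearMap.pow_mulLeft, LinearMap.pow_mulRight, mul_assoc]

end CharPrime

theorem Polynomial.derivative_pow_eq_sum {R : Type*} [Semiring R] (f : R[X]) (n : ℕ) :
    derivative (f ^ n) = ∑ i ∈ range n, f ^ i * derivative f * f ^ (n - 1 - i) := by
  induction n with
  | zero => simp
  | succ n ih =>
    rw [pow_succ, derivative_mul, ih, sum_mul, sum_range_succ, Nat.add_sub_cancel, Nat.sub_self,
      pow_zero, mul_one]
    congr 1
    refine sum_congr rfl fun i hi => ?_
    rw [mul_assoc, ← pow_succ, show n - 1 - i + 1 = n - i by have := mem_range.mp hi; omega]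

section Jacobson

variable {A : Type*} [Ring A] {u v : A}

theorem commutator_linear_C {w : A} (hw : Commute u w) :
    (C u * X + C v) * C w - C w * (C u * X + C v) = C (v * w - w * v) := by
  rw [add_mul, mul_add, mul_assoc, X_mul_C, ← mul_assoc, ← mul_assoc, ← C_mul, ← C_mul, ← C_mul,
    ← C_mul, hw.eq, C_sub]
  abel

theorem iterate_commutator_linear_C
    (hcomm : ∀ i, Commute u ((fun y => v * y - y * v)^[i] u)) (k : ℕ) :
    (fun y => (C u * X + C v) * y - y * (C u * X + C v))^[k] (C u) =
      C ((fun y => v * y - y * v)^[k] u) := by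
  induction k with
  | zero => rfl
  | succ k ih =>
    rw [Function.iterate_succ_apply', ih, commutator_linear_C (hcomm k),
      Function.iterate_succ_apply']

variable {p : ℕ}

theorem derivative_linear_pow_prime (hp : p.Prime) (hpA : (p : A) = 0)
    (hcomm : ∀ i, Commute u ((fun y => v * y - y * v)^[i] u)) :
    derivative ((C u * X + C v) ^ p) = C ((fun y => v * y - y * v)^[p - 1] u) := by
  have hpX : (p : A[X]) = 0 := by rw [← C_eq_natCast, hpA, C_0]
  rw [derivative_pow_eq_sum, ← iterate_commutator_linear_C hcomm,
    iterate_commutator_prime_pred hp hpX]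
  simp

theorem linear_pow_prime (hp : p.Prime) (hpA : (p : A) = 0)
    (hcomm : ∀ i, Commute u ((fun y => v * y - y * v)^[i] u)) :
    (C u * X + C v) ^ p =
      C (v ^ p) + C ((fun y => v * y - y * v)^[p - 1] u) * X + C (u ^ p) * X ^ p := by
  ext k
  simp only [coeff_add, coeff_C, coeff_C_mul_X, coeff_C_mul_X_pow]
  have hp2 := hp.two_le
  cases k with
  | zero =>
    rw [← constantCoeff_apply, map_pow, constantCoeff_apply]
    simp [hp.ne_zero.symm]
  | succ j =>
    rcases lt_trichotomy (j + 1) p with hlt | rfl | hgt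
    · have hd := coeff_derivative ((C u * X + C v) ^ p) j
      rw [derivative_linear_pow_prime hp hpA hcomm, coeff_C] at hd
      rcases j with _ | j
      · simpa [show 1 ≠ p by omega] using hd.symm
      · have hunit : IsUnit ((j + 2 : ℕ) : A) := isUnit_natCast_of_coprime hpA
          ((hp.coprime_iff_not_dvd.2 (Nat.not_dvd_of_pos_of_lt (by omega) hlt)).symm)
        push_cast at hd hunit
        rw [add_assoc (j : A), one_add_one_eq_two] at hd
        simpa [hlt.ne] using hunit.mul_left_eq_zero.mp hd.symm
    · simpa [show j ≠ 0 by omega] using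
        coeff_pow_of_natDegree_le (m := j + 1) (natDegree_linear_le (a := u) (b := v))
    · rw [coeff_eq_zero_of_natDegree_lt]
      · simp [hgt.ne', show j ≠ 0 by omega]
      · calc ((C u * X + C v) ^ p).natDegree ≤ p * 1 :=
            natDegree_pow_le_of_le p natDegree_linear_le
          _ < j + 1 := by omega

theorem add_pow_prime_of_commute_iterate_commutator (hp : p.Prime) (hpA : (p : A) = 0)
    (hcomm : ∀ i, Commute u ((fun y => v * y - y * v)^[i] u)) :
    (v + u) ^ p = v ^ p + u ^ p + (fun y => v * y - y * v)^[p - 1] u := by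
  have h := congrArg (eval₂RingHom' (RingHom.id A) 1 fun a => Commute.one_right a)
    (linear_pow_prime hp hpA hcomm)
  simp only [map_pow, map_add, map_mul, eval₂RingHom'_apply, eval₂_C, eval₂_X, RingHom.id_apply,
    mul_one, one_pow] at h
  rw [add_comm, h]
  abel

end Jacobson

section Leibniz

variable {R : Type*} [CommRing R] {δ : Module.End ℤ R}

theorem commutator_mulLeft_of_leibniz (hδ : ∀ x y, δ (x * y) = x * δ y + δ x * y) (b : R) :
    δ * LinearMap.mulLeft ℤ b - LinearMap.mulLeft ℤ b * δ = LinearMap.mulLeft ℤ (δ b) := by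
  ext y
  simp [hδ]

theorem iterate_commutator_mulLeft_of_leibniz (hδ : ∀ x y, δ (x * y) = x * δ y + δ x * y)
    (b : R) (i : ℕ) :
    (fun T => δ * T - T * δ)^[i] (LinearMap.mulLeft ℤ b) = LinearMap.mulLeft ℤ (δ^[i] b) := by
  induction i with
  | zero => rfl
  | succ i ih =>
    rw [Function.iterate_succ_apply', ih, commutator_mulLeft_of_leibniz hδ,
      Function.iterate_succ_apply']

end Leibniz

/-- **Jacobson–Hochschild identity.** Let `p` be a prime and `R` a commutative ring with
`p • 1 = 0`. For a derivation `D : R → R` (a ℤ-linear map satisfying the Leibniz rule) and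
`a ∈ R`, the additive endomorphism `(D + L_a)^p` equals `D^p + L_{a^p + D^{p-1}(a)}`, where
`L_b` denotes multiplication by `b` and powers are iterated composition. -/
theorem jacobson_identity (p : ℕ) (hp : p.Prime) (R : Type*) [CommRing R]
    (hchar : (p : R) = 0)
    (D : R → R) (hadd : ∀ x y : R, D (x + y) = D x + D y)
    (hleibniz : ∀ x y : R, D (x * y) = x * D y + D x * y) (a : R) :
    ∀ x : R, (fun y => D y + a * y)^[p] x = D^[p] x + (a ^ p + D^[p - 1] a) * x := by
  intro x
  let δ : Module.End ℤ R := (AddMonoidHom.mk' D hadd).toIntLinearMap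
  have hpE : (p : Module.End ℤ R) = 0 := by ext; simp [hchar]
  have hiter := iterate_commutator_mulLeft_of_leibniz (δ := δ) hleibniz a
  have hcomm (c : R) : Commute (LinearMap.mulLeft ℤ a) (LinearMap.mulLeft ℤ c) := by
    ext y; simp [mul_left_comm]
  have key := add_pow_prime_of_commute_iterate_commutator hp hpE fun i => hiter i ▸ hcomm _
  rw [hiter, LinearMap.pow_mulLeft] at key
  have hx := LinearMap.congr_fun key x
  simp only [LinearMap.add_apply, Module.End.pow_apply, LinearMap.mulLeft_apply] at hx
  rw [add_mul, ← add_assoc]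
  exact hx
end

section
/- Let k be a field of characteristic p > 0, n ≥ 1, and A an n×n matrix over k[[z]]. Define the operator E_A on n×n matrices over k[[z]] by E_A(B) = B′ + A·B, and set Ψ = E_A^{p−1}(A), the (p−1)-fold iterate of E_A applied to A. Then D_A^p(v) = Ψ·v for every v ∈ k[[z]]^n. (This is the paper's formula that the p-curvature of the connection d/dz + A is represented by the matrix (d/dz + A)^{p−1}(A).) -/
open PowerSeries

/-- The formal derivative `d/dz` on `k⟦z⟧`. -/
noncomputable def pd (k : Type*) [CommRing k] (f : PowerSeries k) : PowerSeries k :=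
  PowerSeries.derivative k f

/-- Entrywise formal derivative of a matrix over `k⟦z⟧`. -/
noncomputable def matD (k : Type*) [CommRing k] {n : ℕ}
    (B : Matrix (Fin n) (Fin n) (PowerSeries k)) : Matrix (Fin n) (Fin n) (PowerSeries k) :=
  fun i j => pd k (B i j)

/-- The connection operator `D_A = d/dz + A` acting on `k⟦z⟧ⁿ`: `D_A(v) = v′ + A·v`. -/
noncomputable def connOp (k : Type*) [CommRing k] {n : ℕ}
    (A : Matrix (Fin n) (Fin n) (PowerSeries k)) :
    (Fin n → PowerSeries k) → (Fin n → PowerSeries k) :=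
  fun v => (fun i => pd k (v i)) + A.mulVec v

/-- The operator `E_A(B) = B′ + A·B` acting on `n×n` matrices over `k⟦z⟧`. -/
noncomputable def matConnOp (k : Type*) [CommRing k] {n : ℕ}
    (A : Matrix (Fin n) (Fin n) (PowerSeries k)) :
    Matrix (Fin n) (Fin n) (PowerSeries k) → Matrix (Fin n) (Fin n) (PowerSeries k) :=
  fun B => matD k B + A * B

/-!
Differentiating a product gives `D_A (B w) = E_A(B) w + B w′`, i.e. the relation
`D_A ∘ B = E_A(B) + B ∘ ∂` between `k`-linear endomorphisms of `k⟦z⟧ⁿ`. Iterating it yields the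
Leibniz-type expansion `D_A^m ∘ B = ∑ (m choose i) E_A^i(B) ∘ ∂^(m-i)`. For `m = p` the inner
binomial coefficients vanish and `∂^p = 0` in characteristic `p`, so `B = 1` gives
`D_A^p = E_A^p(1) = E_A^(p-1)(A)`.
-/

open Finset

section TwistedLeibniz

variable {S T : Type*} [Semiring S] {D d : S} {f : T → S} {E : T → T}

theorem pow_mul_eq_sum_antidiagonal_choose (h : ∀ x, D * f x = f (E x) + f x * d)
    (m : ℕ) (x : T) :
    D ^ m * f x = ∑ ij ∈ antidiagonal m, m.choose ij.1 • (f (E^[ij.1] x) * d ^ ij.2) := by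
  induction m with
  | zero => simp
  | succ m ih =>
    rw [sum_antidiagonal_choose_succ_nsmul (fun i j => f (E^[i] x) * d ^ j), pow_succ', mul_assoc,
      ih, mul_sum]
    have step (i j : ℕ) : D * (f (E^[i] x) * d ^ j) =
        f (E^[i + 1] x) * d ^ j + f (E^[i] x) * d ^ (j + 1) := by
      rw [← mul_assoc, h, add_mul, Function.iterate_succ_apply', pow_succ', mul_assoc]
    simp only [mul_smul_comm, step, smul_add, sum_add_distrib]
    rw [add_comm]
    refine congrArg _ (sum_congr rfl fun ij hij => ?_)
    rw [m.choose_symm_of_eq_add (HasAntidiagonal.mem_antidiagonal.1 hij).symm]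

theorem pow_prime_mul_eq_of_natCast_eq_zero {p : ℕ} (hp : p.Prime) (hpS : (p : S) = 0)
    (h : ∀ x, D * f x = f (E x) + f x * d) (x : T) :
    D ^ p * f x = f (E^[p] x) + f x * d ^ p := by
  rw [pow_mul_eq_sum_antidiagonal_choose h, sum_eq_add_of_mem (p, 0) (0, p) (by simp) (by simp)
    (by simp [hp.ne_zero])]
  · simp
  · rintro ⟨i, j⟩ hij ⟨hip, hi0⟩
    rw [HasAntidiagonal.mem_antidiagonal] at hij
    have hi : i ≠ 0 := by rintro rfl; simp_all
    have hi' : i < p := lt_of_le_of_ne (by omega) (by rintro rfl; simp_all)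
    obtain ⟨c, hc⟩ := hp.dvd_choose_self hi hi'
    rw [nsmul_eq_mul, hc, Nat.cast_mul, hpS, zero_mul, zero_mul]

end TwistedLeibniz

section ConnectionOperator

open Matrix

variable {k : Type*} [CommRing k] {n : ℕ}

theorem pd_iterate_eq_zero_of_charP (p : ℕ) [CharP k p] (hp : 0 < p) (f : PowerSeries k) :
    (pd k)^[p] f = 0 := by
  ext m
  have hdvd : p ∣ (m + 1).ascFactorial p :=
    (Nat.dvd_factorial hp le_rfl).trans (Nat.factorial_dvd_ascFactorial _ _)
  rw [show pd k = derivative k from rfl, coeff_iterate_derivative,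
    (CharP.cast_eq_zero_iff k p _).2 hdvd, zero_mul, map_zero]

theorem pd_mulVec (B : Matrix (Fin n) (Fin n) (PowerSeries k)) (w : Fin n → PowerSeries k) :
    (fun i => pd k ((B *ᵥ w) i)) = matD k B *ᵥ w + B *ᵥ fun i => pd k (w i) := by
  funext i
  simp only [mulVec, dotProduct, Pi.add_apply, matD, pd, map_sum, Derivation.leibniz,
    smul_eq_mul, ← sum_add_distrib]
  exact sum_congr rfl fun j _ => by ring

theorem matConnOp_one (A : Matrix (Fin n) (Fin n) (PowerSeries k)) : matConnOp k A 1 = A := by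
  ext i j
  by_cases h : i = j <;> simp [matConnOp, matD, pd, h]

noncomputable def derivEnd (k : Type*) [CommRing k] (n : ℕ) :
    Module.End k (Fin n → PowerSeries k) :=
  (derivative k).toLinearMap.compLeft (Fin n)

noncomputable def mulVecEnd (B : Matrix (Fin n) (Fin n) (PowerSeries k)) :
    Module.End k (Fin n → PowerSeries k) :=
  B.mulVecLin.restrictScalars k

noncomputable def connEnd (A : Matrix (Fin n) (Fin n) (PowerSeries k)) :
    Module.End k (Fin n → PowerSeries k) :=
  derivEnd k n + mulVecEnd A

theorem coe_connEnd (A : Matrix (Fin n) (Fin n) (PowerSeries k)) : ⇑(connEnd A) = connOp k A :=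
  rfl

theorem mulVecEnd_one : mulVecEnd (1 : Matrix (Fin n) (Fin n) (PowerSeries k)) = 1 :=
  LinearMap.ext one_mulVec

theorem connEnd_mul_mulVecEnd (A B : Matrix (Fin n) (Fin n) (PowerSeries k)) :
    connEnd A * mulVecEnd B = mulVecEnd (matConnOp k A B) + mulVecEnd B * derivEnd k n := by
  refine LinearMap.ext fun w => ?_
  change (fun i => pd k ((B *ᵥ w) i)) + A *ᵥ B *ᵥ w =
    matConnOp k A B *ᵥ w + B *ᵥ fun i => pd k (w i)
  rw [pd_mulVec, mulVec_mulVec, matConnOp, add_mulVec]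
  abel

theorem derivEnd_pow_eq_zero_of_charP (p : ℕ) [CharP k p] (hp : 0 < p) :
    derivEnd k n ^ p = 0 := by
  have eval_semiconj (i : Fin n) :
      Function.Semiconj (fun w : Fin n → PowerSeries k => w i) (derivEnd k n) (pd k) :=
    fun _ => rfl
  refine LinearMap.ext fun w => funext fun i => ?_
  rw [Module.End.coe_pow]
  exact ((eval_semiconj i).iterate_right p w).trans (pd_iterate_eq_zero_of_charP p hp _)

end ConnectionOperator

theorem pCurvature_matrix_formula_general (k : Type*) [Field k] (p : ℕ) [Fact p.Prime] [CharP k p]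
    (n : ℕ) (A : Matrix (Fin n) (Fin n) (PowerSeries k)) :
    ∀ v : Fin n → PowerSeries k,
      (connOp k A)^[p] v = ((matConnOp k A)^[p - 1] A).mulVec v := by
  intro v
  have hp : p.Prime := Fact.out
  have hpEnd : (p : Module.End k (Fin n → PowerSeries k)) = 0 := by
    rw [← map_natCast (algebraMap k _), CharP.cast_eq_zero, map_zero]
  have hpow := pow_prime_mul_eq_of_natCast_eq_zero hp hpEnd (connEnd_mul_mulVecEnd A) 1
  rw [derivEnd_pow_eq_zero_of_charP p hp.pos, mul_zero, add_zero, mulVecEnd_one, mul_one] at hpow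
  have hΨ : (matConnOp k A)^[p] 1 = (matConnOp k A)^[p - 1] A := by
    rw [← Nat.sub_add_cancel hp.one_le, Function.iterate_succ_apply, matConnOp_one,
      Nat.add_sub_cancel]
  rw [← coe_connEnd, ← Module.End.coe_pow, hpow, hΨ]
  rfl

/-- The `p`-curvature of the connection `d/dz + A` is represented by the matrix
`Ψ = (d/dz + A)^{p-1}(A)`: one has `D_A^p(v) = Ψ·v` for all `v`. -/
theorem pCurvature_matrix_formula (k : Type*) [Field k] (p : ℕ) [Fact p.Prime] [CharP k p]
    (n : ℕ) (hn : 1 ≤ n) (A : Matrix (Fin n) (Fin n) (PowerSeries k)) :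
    ∀ v : Fin n → PowerSeries k,
      (connOp k A)^[p] v = ((matConnOp k A)^[p - 1] A).mulVec v :=
  pCurvature_matrix_formula_general k p n A
end

section
/- Let k be a field of characteristic p > 0, n ≥ 1, A an n×n matrix over k[[z]], and let Ψ be the p-curvature matrix of the connection d/dz + A, i.e. the n×n matrix over k[[z]] with D_A^p(v) = Ψ·v for all v ∈ k[[z]]^n. Then every coefficient of the characteristic polynomial det(t·1 − Ψ) ∈ (k[[z]])[t] has zero formal derivative. (This is the local statement, for GL_n, of the paper's Theorem 3.1: the characteristic polynomial of the p-curvature of a flat connection descends along the Frobenius.) -/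
open PowerSeries

/-!
Since `Ψ v = D_A^p v`, the matrix `Ψ` commutes with `D_A`, and comparing both sides of
`D_A (Ψ v) = Ψ (D_A v)` gives `Ψ' = Ψ A - A Ψ`. Differentiating the coefficients of
`det (t - Ψ)` by Jacobi's formula `D (det M) = tr (adj M · D M)` with `M = t - Ψ` and
`D M = M A - A M` yields `tr (adj M · M · A) - tr (M · adj M · A) = det M · (tr A - tr A) = 0`.
-/

open Polynomial Matrix Finset

namespace Derivation

variable {R A : Type*} [CommRing R] [CommRing A] [Algebra R A] (D : Derivation R A A)

theorem apply_prod {ι : Type*} [DecidableEq ι] (s : Finset ι) (f : ι → A) :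
    D (∏ i ∈ s, f i) = ∑ i ∈ s, D (f i) * ∏ j ∈ s.erase i, f j := by
  induction s using Finset.induction_on with
  | empty => simp
  | insert a s ha ih =>
    rw [prod_insert ha, leibniz, ih, sum_insert ha, erase_insert ha, smul_eq_mul, smul_eq_mul,
      mul_sum, add_comm]
    refine congrArg₂ (· + ·) (mul_comm _ _) (sum_congr rfl fun i hi => ?_)
    rw [erase_insert_of_ne (ne_of_mem_of_not_mem hi ha).symm, prod_insert (by simp [ha])]
    ring

/-- `Derivation.mapCoeffs` with values in `A[X]` rather than in `PolynomialModule A A`. -/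
noncomputable def mapCoeffsSelf : Derivation R A[X] A[X] :=
  PolynomialModule.equivPolynomialSelf.compDer D.mapCoeffs

@[simp]
lemma coeff_mapCoeffsSelf (f : A[X]) (i : ℕ) : (D.mapCoeffsSelf f).coeff i = D (f.coeff i) := rfl

variable {n : Type*} [Fintype n]

theorem apply_mulVec {m : Type*} (M : Matrix m n A) (v : n → A) :
    (fun i => D ((M *ᵥ v) i)) = M.map D *ᵥ v + M *ᵥ fun i => D (v i) := by
  ext i
  simp [mulVec, dotProduct, map_sum, sum_add_distrib, mul_comm, add_comm]

variable [DecidableEq n]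

theorem apply_det_eq_sum_det_updateCol (M : Matrix n n A) :
    D M.det = ∑ j, (M.updateCol j fun i => D (M i j)).det := by
  simp only [det_apply, map_sum, Units.smul_def, map_zsmul, apply_prod, smul_sum]
  rw [sum_comm]
  refine sum_congr rfl fun j _ => sum_congr rfl fun σ _ => ?_
  rw [← mul_prod_erase _ _ (mem_univ j)]
  simp only [updateCol_apply]
  congr 2
  exact prod_congr rfl fun i hi => (if_neg (ne_of_mem_erase hi)).symm

theorem apply_det_eq_trace_adjugate_mul (M : Matrix n n A) :
    D M.det = (M.adjugate * M.map D).trace := by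
  rw [apply_det_eq_sum_det_updateCol]
  refine sum_congr rfl fun j _ => ?_
  rw [← cramer_apply, cramer_eq_adjugate_mulVec]
  simp [mul_apply, mulVec, dotProduct]

theorem apply_det_eq_zero_of_map_eq_commutator {M B : Matrix n n A}
    (h : M.map D = M * B - B * M) : D M.det = 0 := by
  rw [apply_det_eq_trace_adjugate_mul, h, Matrix.mul_sub, trace_sub, ← Matrix.mul_assoc,
    adjugate_mul, ← Matrix.mul_assoc, trace_mul_cycle, mul_adjugate, sub_self]

theorem map_charmatrix_mapCoeffsSelf (M : Matrix n n A) :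
    (charmatrix M).map D.mapCoeffsSelf = -(M.map D).map Polynomial.C := by
  ext i j : 1
  by_cases hij : i = j
  · subst hij
    ext k
    simp [charmatrix_apply_eq, Polynomial.coeff_X, Polynomial.coeff_C, apply_ite D]
  · ext k; simp [charmatrix_apply_ne _ _ _ hij, Polynomial.coeff_C, apply_ite D]

theorem charmatrix_mul_sub_mul_charmatrix (M B : Matrix n n A) :
    charmatrix M * B.map Polynomial.C - B.map Polynomial.C * charmatrix M =
      -(M * B - B * M).map Polynomial.C := by
  rw [charmatrix, Matrix.sub_mul, Matrix.mul_sub, scalar_commute _ (fun _ => Commute.all _ _),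
    RingHom.mapMatrix_apply, Matrix.map_sub _ (map_sub Polynomial.C), Matrix.map_mul,
    Matrix.map_mul]
  abel

theorem apply_coeff_charpoly_eq_zero {M B : Matrix n n A} (h : M.map D = M * B - B * M)
    (i : ℕ) : D (M.charpoly.coeff i) = 0 := by
  have hchar : (charmatrix M).map D.mapCoeffsSelf =
      charmatrix M * B.map Polynomial.C - B.map Polynomial.C * charmatrix M := by
    rw [map_charmatrix_mapCoeffsSelf, charmatrix_mul_sub_mul_charmatrix, h]
  rw [charpoly]
  simpa using congrArg (·.coeff i) (D.mapCoeffsSelf.apply_det_eq_zero_of_map_eq_commutator hchar)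

end Derivation

section Connection

variable {k : Type*} [CommRing k] {n : ℕ}

theorem connOp_mulVec (A Ψ : Matrix (Fin n) (Fin n) (PowerSeries k))
    (v : Fin n → PowerSeries k) :
    connOp k A (Ψ *ᵥ v) = (Ψ.map (pd k) + A * Ψ) *ᵥ v + Ψ *ᵥ fun i => pd k (v i) := by
  calc connOp k A (Ψ *ᵥ v)
      = (Ψ.map (pd k) *ᵥ v + Ψ *ᵥ fun i => pd k (v i)) + A *ᵥ Ψ *ᵥ v :=
        congrArg (· + A *ᵥ Ψ *ᵥ v) ((PowerSeries.derivative k).apply_mulVec Ψ v)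
    _ = _ := by rw [add_mulVec, mulVec_mulVec]; abel

theorem map_pd_eq_of_commute_connOp {A Ψ : Matrix (Fin n) (Fin n) (PowerSeries k)}
    (h : Function.Commute (connOp k A) Ψ.mulVec) : Ψ.map (pd k) = Ψ * A - A * Ψ := by
  refine ext_of_mulVec_single fun j => ?_
  have hj := h (Pi.single j 1)
  rw [connOp_mulVec, connOp, mulVec_add, mulVec_mulVec, add_mulVec] at hj
  rw [sub_mulVec]
  linear_combination hj

end Connection

theorem charpoly_pCurvature_flat_general (k : Type*) [Field k] (p : ℕ)
    (n : ℕ) (A Ψ : Matrix (Fin n) (Fin n) (PowerSeries k))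
    (hΨ : ∀ v : Fin n → PowerSeries k, (connOp k A)^[p] v = Ψ.mulVec v) :
    ∀ i : ℕ, pd k ((Matrix.charpoly Ψ).coeff i) = 0 := by
  have hcomm : Function.Commute (connOp k A) Ψ.mulVec := by
    have hiter : Ψ.mulVec = (connOp k A)^[p] := funext fun v => (hΨ v).symm
    rw [hiter]
    exact (Function.Commute.iterate_self _ p).symm
  exact (PowerSeries.derivative k).apply_coeff_charpoly_eq_zero
    (map_pd_eq_of_commute_connOp hcomm)

/-- Every coefficient of the characteristic polynomial `det(t·1 − Ψ)` of the
`p`-curvature matrix `Ψ` of the flat connection `d/dz + A` has zero formal derivative. -/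
theorem charpoly_pCurvature_flat (k : Type*) [Field k] (p : ℕ) [Fact p.Prime] [CharP k p]
    (n : ℕ) (hn : 1 ≤ n) (A Ψ : Matrix (Fin n) (Fin n) (PowerSeries k))
    (hΨ : ∀ v : Fin n → PowerSeries k, (connOp k A)^[p] v = Ψ.mulVec v) :
    ∀ i : ℕ, pd k ((Matrix.charpoly Ψ).coeff i) = 0 :=
  charpoly_pCurvature_flat_general k p n A Ψ hΨ
end

section
/- Let k be a field of characteristic p > 0, n ≥ 1, and A an n×n matrix over k[[z]] such that D_A^p = 0 (the connection d/dz + A has vanishing p-curvature). Then there exists an invertible n×n matrix U over k[[z]] with U′ + A·U = 0; i.e. the columns of U form a basis of horizontal sections. (This is the local, rank-n case of Cartier descent, Lemma A.1 of the paper.) -/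
open PowerSeries

/-!
Vanishing `p`-curvature makes the truncated Taylor formula `v ↦ ∑_{i<p} (-z)^i/i! · D_A^i v`
produce horizontal sections: applying `D_A` to it, the derivatives of the coefficients cancel the
shifted terms in pairs (as `((-z)^{i+1}/(i+1)!)′ = -(-z)^i/i!` for `i + 1 < p`), and the one
leftover term carries `D_A^p v = 0`. The formula is the identity modulo `z`, so applied to the
standard basis it gives a matrix of horizontal sections congruent to `1` modulo `z`.
-/

open Finset Nat

section TaylorSum

variable {R M : Type*} [CommRing R] [AddCommGroup M] [Module R M]

def taylorSum (D : M → M) (c : ℕ → R) (p : ℕ) (m : M) : M :=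
  ∑ i ∈ range p, c i • D^[i] m

theorem map_taylorSum_eq_zero (d : R → R) (D : M →+ M)
    (hD : ∀ (f : R) (m : M), D (f • m) = d f • m + f • D m)
    {c : ℕ → R} {p : ℕ} (hc₀ : d (c 0) = 0) (hc : ∀ i, i + 1 < p → d (c (i + 1)) = -c i)
    {m : M} (hm : D^[p] m = 0) : D (taylorSum D c p m) = 0 := by
  cases p with
  | zero => simp [taylorSum]
  | succ q =>
    have hderiv : ∑ i ∈ range (q + 1), d (c i) • D^[i] m =
        -∑ i ∈ range q, c i • D^[i + 1] m := by
      rw [sum_range_succ', hc₀, zero_smul, add_zero, ← sum_neg_distrib]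
      exact sum_congr rfl fun i hi => by rw [hc i (by simpa using hi), neg_smul]
    have hshift :
        ∑ i ∈ range (q + 1), c i • D^[i + 1] m = ∑ i ∈ range q, c i • D^[i + 1] m := by
      rw [sum_range_succ, hm, smul_zero, add_zero]
    simp only [taylorSum, map_sum, hD, sum_add_distrib, ← Function.iterate_succ_apply' D,
      hderiv, hshift, neg_add_cancel]

end TaylorSum

section ExpNeg

variable (k : Type*) [Field k]

noncomputable def expNegTerm (i : ℕ) : PowerSeries k := C (i ! : k)⁻¹ * (-X) ^ i

@[simp] theorem expNegTerm_zero : expNegTerm k 0 = 1 := by simp [expNegTerm]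

theorem constantCoeff_expNegTerm_succ (i : ℕ) :
    constantCoeff (expNegTerm k (i + 1)) = 0 := by
  simp [expNegTerm]

theorem derivative_expNegTerm_succ {i : ℕ} (hi : ((i + 1)! : k) ≠ 0) :
    d⁄dX k (expNegTerm k (i + 1)) = -expNegTerm k i := by
  have hi' : ((i + 1 : ℕ) : k) ≠ 0 :=
    left_ne_zero_of_mul (by rwa [factorial_succ, cast_mul] at hi)
  have hcancel : C ((i + 1 : ℕ) : k)⁻¹ * ((i + 1 : ℕ) : PowerSeries k) = 1 := by
    rw [← map_natCast C, ← map_mul, inv_mul_cancel₀ hi', map_one]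
  simp only [expNegTerm, Derivation.leibniz, derivative_C, derivative_pow, map_neg, derivative_X,
    smul_eq_mul, mul_zero, add_zero, add_tsub_cancel_right]
  rw [factorial_succ, cast_mul, mul_inv, map_mul]
  linear_combination -(C (i ! : k)⁻¹ * (-X) ^ i) * hcancel

theorem constantCoeff_taylorSum_expNegTerm {ι : Type*}
    (D : (ι → PowerSeries k) → ι → PowerSeries k) {p : ℕ} (hp : p ≠ 0)
    (v : ι → PowerSeries k) (r : ι) :
    constantCoeff (taylorSum D (expNegTerm k) p v r) = constantCoeff (v r) := by
  obtain ⟨q, rfl⟩ := exists_eq_succ_of_ne_zero hp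
  simp [taylorSum, sum_range_succ', constantCoeff_expNegTerm_succ]

end ExpNeg

section Connection

variable {k : Type*} [CommRing k] {n : ℕ} (A : Matrix (Fin n) (Fin n) (PowerSeries k))

noncomputable def connOpAddHom : (Fin n → PowerSeries k) →+ (Fin n → PowerSeries k) :=
  AddMonoidHom.mk' (connOp k A) fun v w => by
    ext i
    simp only [connOp, pd, Pi.add_apply, map_add, Matrix.mulVec_add]
    abel

theorem connOp_smul (f : PowerSeries k) (v : Fin n → PowerSeries k) :
    connOp k A (f • v) = pd k f • v + f • connOp k A v := by
  funext i
  simp only [connOp, pd, Pi.add_apply, Pi.smul_apply, smul_eq_mul, Derivation.leibniz,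
    Matrix.mulVec_smul]
  ring

theorem matD_add_mul_apply (U : Matrix (Fin n) (Fin n) (PowerSeries k)) (r j : Fin n) :
    (matD k U + A * U) r j = connOp k A (fun r => U r j) r := by
  simp [matD, connOp, Matrix.mul_apply, Matrix.mulVec, dotProduct]

end Connection

theorem cartier_descent_local_general (k : Type*) [Field k] (p : ℕ) [Fact p.Prime] [CharP k p]
    (n : ℕ) (A : Matrix (Fin n) (Fin n) (PowerSeries k))
    (hA : ∀ v : Fin n → PowerSeries k, (connOp k A)^[p] v = 0) :
    ∃ U : Matrix (Fin n) (Fin n) (PowerSeries k),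
      IsUnit U.det ∧ matD k U + A * U = 0 := by
  let U : Matrix (Fin n) (Fin n) (PowerSeries k) :=
    .of fun r j => taylorSum (connOpAddHom A) (expNegTerm k) p (Pi.single j 1) r
  have hU₀ : U.map constantCoeff = 1 := by
    ext r j
    simp [U, constantCoeff_taylorSum_expNegTerm k _ (Fact.out : p.Prime).ne_zero, Pi.single_apply,
      Matrix.one_apply]
  refine ⟨U, ?_, ?_⟩
  · rw [isUnit_iff_constantCoeff, RingHom.map_det, RingHom.mapMatrix_apply, hU₀, Matrix.det_one]
    exact isUnit_one
  · have hcoeff : ∀ i, i + 1 < p → pd k (expNegTerm k (i + 1)) = -expNegTerm k i := fun i hi =>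
      derivative_expNegTerm_succ k ((IsUnit.natCast_factorial_iff_of_charP p).2 hi).ne_zero
    refine Matrix.ext fun r j => ?_
    rw [matD_add_mul_apply]
    exact congrFun (map_taylorSum_eq_zero (pd k) (connOpAddHom A) (connOp_smul A)
      (by simp [pd]) hcoeff (hA _)) r

/-- **Local Cartier descent.** If the connection `d/dz + A` has vanishing `p`-curvature,
then there is an invertible matrix `U` over `k⟦z⟧` with `U′ + A·U = 0`, i.e. whose
columns form a basis of horizontal sections. -/
theorem cartier_descent_local (k : Type*) [Field k] (p : ℕ) [Fact p.Prime] [CharP k p]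
    (n : ℕ) (hn : 1 ≤ n) (A : Matrix (Fin n) (Fin n) (PowerSeries k))
    (hA : ∀ v : Fin n → PowerSeries k, (connOp k A)^[p] v = 0) :
    ∃ U : Matrix (Fin n) (Fin n) (PowerSeries k),
      IsUnit U.det ∧ matD k U + A * U = 0 :=
  cartier_descent_local_general k p n A hA
end

section
/- Let k be a field of characteristic p > 0. For every g ∈ k[[z]] with g′ = 0, there exists f ∈ k[[z]] with f^p + f^{(p−1)} = g, where f^{(p−1)} denotes the (p−1)-st iterated formal derivative of f. (This is the local, rank-one surjectivity of the p-Hitchin/p-curvature map h_p, the last nontrivial exactness assertion of the four-term exact sequence in Proposition A.4.) -/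
open PowerSeries

namespace PowerSeries

variable {R : Type*} [CommRing R]

theorem coeff_pow_expChar (p : ℕ) [ExpChar R p] (f : R⟦X⟧) (n : ℕ) :
    coeff n (f ^ p) = if p ∣ n then coeff (n / p) f ^ p else 0 := by
  have hp : p ≠ 0 := expChar_ne_zero R p
  rw [← MvPowerSeries.map_frobenius_expand p hp]
  change coeff n (map (frobenius R p) (expand p hp f)) = _
  rw [coeff_map, coeff_expand, apply_ite (frobenius R p), frobenius_def, map_zero]

theorem coeff_eq_zero_of_derivative_eq_zero [IsDomain R] (p : ℕ) [CharP R p] {g : R⟦X⟧}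
    (hg : d⁄dX R g = 0) {n : ℕ} (hn : ¬ p ∣ n) : coeff n g = 0 := by
  obtain ⟨m, rfl⟩ : ∃ m, n = m + 1 := Nat.exists_eq_succ_of_ne_zero (by rintro rfl; simp at hn)
  have hm : ((m + 1 : ℕ) : R) ≠ 0 := by rwa [Ne, CharP.cast_eq_zero_iff R p]
  have hcoeff := coeff_derivative g m
  rw [hg, map_zero, eq_comm] at hcoeff
  push_cast at hm
  exact (mul_eq_zero.mp hcoeff).resolve_right hm

end PowerSeries

section CharP

variable {R : Type*} [CommRing R] (p : ℕ) [Fact p.Prime] [CharP R p]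

theorem Nat.cast_succ_ascFactorial_pred_prime (n : ℕ) :
    ((n + 1).ascFactorial (p - 1) : R) = if p ∣ n then -1 else 0 := by
  have hp : p.Prime := Fact.out
  split_ifs with h
  · have hn : ((n + 1 : ℕ) : R) = ((1 : ℕ) : R) := by
      rw [Nat.cast_succ, (CharP.cast_eq_zero_iff R p n).mpr h, Nat.cast_one, zero_add]
    rw [Nat.cast_ascFactorial, hn, ← Nat.cast_ascFactorial, Nat.one_ascFactorial,
      ← map_natCast (ZMod.castHom (dvd_refl p) R), ZMod.wilsons_lemma, map_neg, map_one]
  · rw [CharP.cast_eq_zero_iff R p]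
    have hdvd : p ∣ n * (n + 1).ascFactorial (p - 1) := by
      have hsplit : n * (n + 1).ascFactorial (p - 1) = n.ascFactorial p := by
        simpa [Nat.ascFactorial, Nat.add_sub_cancel' hp.one_le] using
          Nat.ascFactorial_mul_ascFactorial n 1 (p - 1)
      rw [hsplit]
      exact (Nat.dvd_factorial hp.pos le_rfl).trans (Nat.factorial_dvd_ascFactorial n p)
    exact (hp.dvd_mul.mp hdvd).resolve_left h

theorem PowerSeries.coeff_iterate_derivative_pred_prime (f : R⟦X⟧) (n : ℕ) :
    coeff n ((d⁄dX R)^[p - 1] f) = if p ∣ n then -coeff (n + (p - 1)) f else 0 := by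
  rw [coeff_iterate_derivative, Nat.cast_succ_ascFactorial_pred_prime p]
  split_ifs <;> simp

end CharP

section Solution

variable {R : Type*} [CommRing R]

noncomputable def pCurvaturePreimageCoeff (p : ℕ) [Fact p.Prime] (b : ℕ → R) (n : ℕ) : R :=
  if _ : p ∣ n + 1 then
    pCurvaturePreimageCoeff p b ((n + 1) / p - 1) ^ p - b ((n + 1) / p - 1)
  else 0
decreasing_by
  have hp : p.Prime := Fact.out
  obtain ⟨q, hq⟩ : p ∣ n + 1 := ‹_›
  have hq0 : q ≠ 0 := by rintro rfl; simp at hq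
  have h2q : 2 * q ≤ p * q := Nat.mul_le_mul_right q hp.two_le
  rw [hq, Nat.mul_div_cancel_left _ hp.pos]
  omega

theorem pCurvaturePreimageCoeff_mul_add_pred (p : ℕ) [Fact p.Prime] (b : ℕ → R) (m : ℕ) :
    pCurvaturePreimageCoeff p b (p * m + (p - 1)) = pCurvaturePreimageCoeff p b m ^ p - b m := by
  have hp : p.Prime := Fact.out
  have hsucc : p * m + (p - 1) + 1 = p * (m + 1) := by
    rw [mul_add_one, add_assoc, Nat.sub_add_cancel hp.one_le]
  rw [pCurvaturePreimageCoeff.eq_1, dif_pos ⟨m + 1, hsucc⟩, hsucc,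
    Nat.mul_div_cancel_left _ hp.pos, Nat.add_sub_cancel]

end Solution

/-- **Surjectivity of the local rank-one `p`-curvature map.** For every `g ∈ k⟦z⟧` with
`g′ = 0` there exists `f ∈ k⟦z⟧` with `f^p + f^{(p−1)} = g`. -/
theorem pCurvature_map_surjective (k : Type*) [Field k] (p : ℕ) [Fact p.Prime] [CharP k p] :
    ∀ g : PowerSeries k, pd k g = 0 →
      ∃ f : PowerSeries k, f ^ p + (pd k)^[p - 1] f = g := by
  intro g hg
  have hp : p.Prime := Fact.out
  refine ⟨mk (pCurvaturePreimageCoeff p fun m ↦ coeff (p * m) g), ?_⟩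
  ext n
  change coeff n (_ ^ p + (d⁄dX k)^[p - 1] _) = _
  rw [map_add, coeff_pow_expChar, coeff_iterate_derivative_pred_prime]
  by_cases h : p ∣ n
  · obtain ⟨m, rfl⟩ := h
    simp only [dvd_mul_right, if_true, Nat.mul_div_cancel_left _ hp.pos, coeff_mk,
      pCurvaturePreimageCoeff_mul_add_pred]
    ring
  · rw [if_neg h, if_neg h, add_zero, coeff_eq_zero_of_derivative_eq_zero p hg h]
end
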